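/- arXiv:1207.1911 — 7 statements merged into one kernel-verified Lean document; each statement's English description precedes it below -/
import Mathlib

section
/- Let g > 0 and let F: ℝ → ℝ be a smooth solution of the modified Painlevé II equation F''(z) = zF(z) + 2εF(z)³ with ε = ±1. Then the function ψ(x,t) = exp(i g(x - 2gt²/3) t) · g^{1/3} · F(g^{1/3}(x - gt²)) satisfies the cubic nonlinear Schrödinger equation i ψ_t + ψ_{xx} = 2ε|ψ|²ψ. -/
/-!
Write `ψ = e^{iθ} a F(z)` with `a = g^{1/3}`, `z = a (x - g t²)` and `θ = g x t - 2 g² t³ / 3`.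
The terms in `F'(z)` cancel in `i ψ_t + ψ_xx` because the drift `∂ₜz = -2 a g t` is `-2 a θ_x`, and
`θ_t + θ_x² = g (x - g t²) = a² z`, so that `i ψ_t + ψ_xx = e^{iθ} a³ (F''(z) - z F(z))`, which
Painlevé II turns into `2 ε a³ F(z)³ e^{iθ} = 2 ε |ψ|² ψ`.
-/

open Complex

theorem HasDerivAt.cexp_I_mul_ofReal_mul {θ : ℝ → ℝ} {f : ℝ → ℂ} {θ' : ℝ} {f' : ℂ} {s : ℝ}
    (hθ : HasDerivAt θ θ' s) (hf : HasDerivAt f f' s) :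
    HasDerivAt (fun s => Complex.exp (I * θ s) * f s)
      (Complex.exp (I * θ s) * (I * θ' * f s + f')) s :=
  (hθ.ofReal_comp.const_mul I).cexp.mul hf |>.congr_deriv (by ring)

theorem ContDiff.hasDerivAt_deriv_deriv {F : ℝ → ℝ} (hF : ContDiff ℝ 2 F) (z : ℝ) :
    HasDerivAt (deriv F) (deriv (deriv F) z) z :=
  (((contDiff_succ_iff_deriv (n := 1)).mp hF).2.2.differentiable one_ne_zero z).hasDerivAt

namespace PainleveNLS

noncomputable section

variable (a g : ℝ) (F : ℝ → ℝ)

def phase (x t : ℝ) : ℝ := g * (x - 2 * g * t ^ 2 / 3) * t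

def coord (x t : ℝ) : ℝ := a * (x - g * t ^ 2)

def ansatz (x t : ℝ) : ℂ := exp (I * phase g x t) * (a * F (coord a g x t) : ℝ)

end

variable {a g F}

theorem hasDerivAt_phase_time (x t : ℝ) :
    HasDerivAt (fun s => phase g x s) (g * x - 2 * g ^ 2 * t ^ 2) t :=
  (((((hasDerivAt_pow 2 t).const_mul (2 * g)).div_const 3).const_sub x).const_mul g).mul
    (hasDerivAt_id' t) |>.congr_deriv (by ring)

theorem hasDerivAt_phase_space (x t : ℝ) : HasDerivAt (fun y => phase g y t) (g * t) x :=
  (((hasDerivAt_id' x).sub_const (2 * g * t ^ 2 / 3)).const_mul g).mul_const t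
    |>.congr_deriv (by ring)

theorem hasDerivAt_coord_time (x t : ℝ) :
    HasDerivAt (fun s => coord a g x s) (-(2 * a * g * t)) t :=
  (((hasDerivAt_pow 2 t).const_mul g).const_sub x).const_mul a |>.congr_deriv (by ring)

theorem hasDerivAt_coord_space (x t : ℝ) : HasDerivAt (fun y => coord a g y t) a x :=
  ((hasDerivAt_id' x).sub_const (g * t ^ 2)).const_mul a |>.congr_deriv (by ring)

theorem hasDerivAt_ansatz_time (hF : Differentiable ℝ F) (x t : ℝ) :
    HasDerivAt (fun s => ansatz a g F x s)
      (exp (I * phase g x t) * (I * (g * x - 2 * g ^ 2 * t ^ 2 : ℝ) * (a * F (coord a g x t) : ℝ)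
        + (a * (deriv F (coord a g x t) * -(2 * a * g * t)) : ℝ))) t :=
  (hasDerivAt_phase_time x t).cexp_I_mul_ofReal_mul
    ((((hF _).hasDerivAt.comp t (hasDerivAt_coord_time x t)).const_mul a).ofReal_comp)

theorem hasDerivAt_ansatz_space (hF : Differentiable ℝ F) (x t : ℝ) :
    HasDerivAt (fun y => ansatz a g F y t)
      (exp (I * phase g x t) * (I * (g * t : ℝ) * (a * F (coord a g x t) : ℝ)
        + (a ^ 2 * deriv F (coord a g x t) : ℝ))) x :=
  (hasDerivAt_phase_space x t).cexp_I_mul_ofReal_mul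
    ((((hF _).hasDerivAt.comp x (hasDerivAt_coord_space x t)).const_mul a).ofReal_comp
      |>.congr_deriv (by push_cast; ring))

theorem hasDerivAt_ansatz_space_space (hF : ContDiff ℝ 2 F) (x t : ℝ) :
    HasDerivAt (fun y => deriv (fun y' => ansatz a g F y' t) y)
      (exp (I * phase g x t) * (I * (g * t : ℝ) * (I * (g * t : ℝ) * (a * F (coord a g x t) : ℝ)
          + (a ^ 2 * deriv F (coord a g x t) : ℝ))
        + (I * (g * t : ℝ) * (a * (deriv F (coord a g x t) * a) : ℝ)
          + (a ^ 2 * (deriv (deriv F) (coord a g x t) * a) : ℝ)))) x := by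
  have hF1 : Differentiable ℝ F := hF.differentiable two_ne_zero
  rw [funext fun y => (hasDerivAt_ansatz_space hF1 y t).deriv]
  have hcoord := hasDerivAt_coord_space (a := a) (g := g) x t
  exact (hasDerivAt_phase_space x t).cexp_I_mul_ofReal_mul
    (((((hF1 _).hasDerivAt.comp x hcoord).const_mul a).ofReal_comp.const_mul _).add
      (((hF.hasDerivAt_deriv_deriv _).comp x hcoord).const_mul (a ^ 2)).ofReal_comp)

theorem norm_ansatz (x t : ℝ) : ‖ansatz a g F x t‖ = |a * F (coord a g x t)| := by
  rw [ansatz, norm_mul, norm_exp_I_mul_ofReal, one_mul, norm_real, Real.norm_eq_abs]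

theorem ansatz_solves_nls (hF : ContDiff ℝ 2 F) (ha : a ^ 3 = g) {ε : ℝ}
    (hPII : ∀ z, deriv (deriv F) z = z * F z + 2 * ε * F z ^ 3) (x t : ℝ) :
    I * deriv (fun s => ansatz a g F x s) t +
        deriv (fun y => deriv (fun y' => ansatz a g F y' t) y) x =
      2 * ε * ‖ansatz a g F x t‖ ^ 2 * ansatz a g F x t := by
  rw [(hasDerivAt_ansatz_time (hF.differentiable two_ne_zero) x t).deriv,
    (hasDerivAt_ansatz_space_space hF x t).deriv, norm_ansatz, ← ofReal_pow, sq_abs, hPII,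
    ansatz, ← ha]
  simp only [coord, ofReal_mul, ofReal_add, ofReal_sub, ofReal_neg, ofReal_pow, ofReal_ofNat]
  ring_nf
  rw [I_sq]
  ring

end PainleveNLS

theorem stmt_3_general (g ε : ℝ) (hg : 0 < g)
    (F : ℝ → ℝ) (hF : ContDiff ℝ 2 F)
    (hPII : ∀ z, deriv (deriv F) z = z * F z + 2 * ε * (F z) ^ 3)
    (ψ : ℝ → ℝ → ℂ)
    (hψ : ∀ x t, ψ x t =
      Complex.exp (Complex.I * (g * (x - 2 * g * t ^ 2 / 3) * t : ℝ)) *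
        ((g ^ ((1 : ℝ) / 3) : ℝ) : ℂ) *
        ((F ((g ^ ((1 : ℝ) / 3) : ℝ) * (x - g * t ^ 2)) : ℝ) : ℂ)) :
    ∀ x t,
      Complex.I * deriv (fun s => ψ x s) t +
        deriv (fun y => deriv (fun y' => ψ y' t) y) x =
      2 * ε * ‖ψ x t‖ ^ 2 * ψ x t := by
  have hψ_eq : ψ = PainleveNLS.ansatz (g ^ ((1 : ℝ) / 3)) g F := by
    ext x t
    rw [hψ, PainleveNLS.ansatz, mul_assoc, ← ofReal_mul]
    rfl
  have hcube : (g ^ ((1 : ℝ) / 3)) ^ 3 = g := by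
    simpa using Real.rpow_inv_natCast_pow hg.le three_ne_zero
  subst hψ_eq
  exact PainleveNLS.ansatz_solves_nls hF hcube hPII

theorem stmt_3 (g ε : ℝ) (hg : 0 < g) (hε : ε = 1 ∨ ε = -1)
    (F : ℝ → ℝ) (hF : ContDiff ℝ 2 F)
    (hPII : ∀ z, deriv (deriv F) z = z * F z + 2 * ε * (F z) ^ 3)
    (ψ : ℝ → ℝ → ℂ)
    (hψ : ∀ x t, ψ x t =
      Complex.exp (Complex.I * (g * (x - 2 * g * t ^ 2 / 3) * t : ℝ)) *
        ((g ^ ((1 : ℝ) / 3) : ℝ) : ℂ) *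
        ((F ((g ^ ((1 : ℝ) / 3) : ℝ) * (x - g * t ^ 2)) : ℝ) : ℂ)) :
    ∀ x t,
      Complex.I * deriv (fun s => ψ x s) t +
        deriv (fun y => deriv (fun y' => ψ y' t) y) x =
      2 * ε * ‖ψ x t‖ ^ 2 * ψ x t :=
  stmt_3_general g ε hg F hF hPII ψ hψ
end

section
/- For real parameters φ, v, k with k > 0, the pulse A(x,t) = e^{iφ} (k / cosh(k(x - vt)))^{1/2} · exp(i(vx/2 + (k² - v²)t/4)) is a solution of the quintic nonlinear Schrödinger equation i A_t + A_{xx} + (3/4)|A|⁴A = 0. -/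
/-!
The pulse is the Galilean boost, with velocity `v`, of the standing wave `e^{iφ} u(ξ)`,
`u(ξ) = √(k / cosh(kξ))`. The boost `u(x - vt) e^{i(vx/2 + μt)}` turns `i∂ₜ + ∂ₓ²` into the
profile operator `u ↦ u'' - (μ + v²/4) u` and leaves the modulus unchanged, so with
`μ + v²/4 = k²/4` the equation reduces to the ODE `u'' = (k²/4) u - (3/4) u⁵`. Since
`cosh(kξ) u² = k`, one has `u' = -½ sinh(kξ) u³`, and differentiating once more the ODE
follows from `cosh² - sinh² = 1`.
-/

open Complex Real

noncomputable def galileanBoost (u : ℝ → ℂ) (v μ x t : ℝ) : ℂ :=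
  u (x - v * t) * exp (I * ↑(v * x / 2 + μ * t))

section GalileanBoost

variable {u u' u'' : ℝ → ℂ} (v μ : ℝ)

theorem hasDerivAt_galileanBoost_space (hu : ∀ ξ, HasDerivAt u (u' ξ) ξ) (x t : ℝ) :
    HasDerivAt (fun y => galileanBoost u v μ y t)
      (galileanBoost (fun ξ => u' ξ + I * (v / 2) * u ξ) v μ x t) x := by
  have hξ : HasDerivAt (fun y : ℝ => y - v * t) 1 x := (hasDerivAt_id x).sub_const _
  have hθ : HasDerivAt (fun y : ℝ => v * y / 2 + μ * t) (v / 2) x := by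
    simpa using (((hasDerivAt_id x).const_mul v).div_const 2).add_const (μ * t)
  refine (((hu _).scomp x hξ).mul (hθ.ofReal_comp.const_mul I).cexp).congr_deriv ?_
  simp only [galileanBoost, one_smul, Function.comp_apply]
  push_cast
  ring

theorem hasDerivAt_galileanBoost_time (hu : ∀ ξ, HasDerivAt u (u' ξ) ξ) (x t : ℝ) :
    HasDerivAt (fun s => galileanBoost u v μ x s)
      (galileanBoost (fun ξ => -v * u' ξ + I * μ * u ξ) v μ x t) t := by
  have hξ : HasDerivAt (fun s : ℝ => x - v * s) (-v) t := by
    simpa using ((hasDerivAt_id t).const_mul v).const_sub x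
  have hθ : HasDerivAt (fun s : ℝ => v * x / 2 + μ * s) μ t := by
    simpa using ((hasDerivAt_id t).const_mul μ).const_add (v * x / 2)
  refine (((hu _).scomp t hξ).mul (hθ.ofReal_comp.const_mul I).cexp).congr_deriv ?_
  simp only [galileanBoost, Function.comp_apply, real_smul]
  push_cast
  ring

theorem galileanBoost_schrodinger (hu : ∀ ξ, HasDerivAt u (u' ξ) ξ)
    (hu' : ∀ ξ, HasDerivAt u' (u'' ξ) ξ) (x t : ℝ) :
    I * deriv (fun s => galileanBoost u v μ x s) t +
        deriv (fun y => deriv (fun y' => galileanBoost u v μ y' t) y) x =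
      galileanBoost (fun ξ => u'' ξ - (μ + v ^ 2 / 4) * u ξ) v μ x t := by
  have hDx : (fun y => deriv (fun y' => galileanBoost u v μ y' t) y) =
      fun y => galileanBoost (fun ξ => u' ξ + I * (v / 2) * u ξ) v μ y t :=
    funext fun y => (hasDerivAt_galileanBoost_space v μ hu y t).deriv
  have hDu : ∀ ξ, HasDerivAt (fun ξ => u' ξ + I * (v / 2) * u ξ)
      (u'' ξ + I * (v / 2) * u' ξ) ξ :=
    fun ξ => (hu' ξ).add ((hu ξ).const_mul _)
  rw [hDx, (hasDerivAt_galileanBoost_space v μ hDu x t).deriv,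
    (hasDerivAt_galileanBoost_time v μ hu x t).deriv]
  simp only [galileanBoost]
  linear_combination (u (x - v * t) * exp (I * ↑(v * x / 2 + μ * t)) * (v ^ 2 / 4 + μ)) * I_mul_I

theorem norm_galileanBoost (u : ℝ → ℂ) (x t : ℝ) :
    ‖galileanBoost u v μ x t‖ = ‖u (x - v * t)‖ := by
  rw [galileanBoost, norm_mul, norm_exp_I_mul_ofReal, mul_one]

end GalileanBoost

noncomputable def quinticSoliton (k ξ : ℝ) : ℝ := √(k / Real.cosh (k * ξ))

section QuinticSoliton

variable {k : ℝ}

theorem cosh_mul_quinticSoliton_sq (hk : 0 ≤ k) (ξ : ℝ) :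
    Real.cosh (k * ξ) * quinticSoliton k ξ ^ 2 = k := by
  rw [quinticSoliton, sq_sqrt (div_nonneg hk (cosh_pos _).le)]
  field_simp [(cosh_pos (k * ξ)).ne']

theorem quinticSoliton_pos (hk : 0 < k) (ξ : ℝ) : 0 < quinticSoliton k ξ :=
  sqrt_pos.2 (div_pos hk (cosh_pos _))

theorem hasDerivAt_quinticSoliton (hk : 0 < k) (ξ : ℝ) :
    HasDerivAt (quinticSoliton k) (-(1 / 2) * Real.sinh (k * ξ) * quinticSoliton k ξ ^ 3) ξ := by
  have hc : HasDerivAt (fun ξ => Real.cosh (k * ξ)) (Real.sinh (k * ξ) * k) ξ := by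
    simpa using ((hasDerivAt_id' ξ).const_mul k).cosh
  refine ((hc.inv (cosh_pos _).ne').const_mul k |>.sqrt (div_pos hk (cosh_pos _)).ne').congr_deriv ?_
  have hq := cosh_mul_quinticSoliton_sq hk.le ξ
  have hq0 := (quinticSoliton_pos hk ξ).ne'
  have hc0 := (cosh_pos (k * ξ)).ne'
  change _ / (2 * quinticSoliton k ξ) = _
  field_simp
  linear_combination Real.sinh (k * ξ) * (Real.cosh (k * ξ) * quinticSoliton k ξ ^ 2 + k) * hq

theorem hasDerivAt_deriv_quinticSoliton (hk : 0 < k) (ξ : ℝ) :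
    HasDerivAt (fun ξ => -(1 / 2) * Real.sinh (k * ξ) * quinticSoliton k ξ ^ 3)
      (k ^ 2 / 4 * quinticSoliton k ξ - 3 / 4 * quinticSoliton k ξ ^ 5) ξ := by
  have hs : HasDerivAt (fun ξ => Real.sinh (k * ξ)) (Real.cosh (k * ξ) * k) ξ := by
    simpa using ((hasDerivAt_id' ξ).const_mul k).sinh
  refine ((hs.const_mul _).mul ((hasDerivAt_quinticSoliton hk ξ).pow 3)).congr_deriv ?_
  have hq := cosh_mul_quinticSoliton_sq hk.le ξ
  have hcs := Real.cosh_sq_sub_sinh_sq (k * ξ)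
  simp only [Pi.pow_apply]
  linear_combination (-(1 / 2) * k * quinticSoliton k ξ + 3 / 4 * quinticSoliton k ξ *
    (Real.cosh (k * ξ) * quinticSoliton k ξ ^ 2 + k)) * hq - 3 / 4 * quinticSoliton k ξ ^ 5 * hcs

end QuinticSoliton

theorem stmt_6 (φ v k : ℝ) (hk : 0 < k) (A : ℝ → ℝ → ℂ)
    (hA : ∀ x t, A x t =
      Complex.exp (Complex.I * (φ : ℂ)) *
        ((Real.sqrt (k / Real.cosh (k * (x - v * t))) : ℝ) : ℂ) *
        Complex.exp (Complex.I *
          ((v * x / 2 + (k ^ 2 - v ^ 2) * t / 4 : ℝ) : ℂ))) :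
    ∀ x t,
      Complex.I * deriv (fun s => A x s) t +
        deriv (fun y => deriv (fun y' => A y' t) y) x +
        (3 / 4) * (‖A x t‖) ^ 4 * A x t = 0 := by
  set c := exp (I * φ)
  obtain rfl : A = galileanBoost (fun ξ => c * quinticSoliton k ξ) v ((k ^ 2 - v ^ 2) / 4) := by
    ext x t
    rw [hA, galileanBoost, quinticSoliton, mul_assoc]
    ring_nf
  have hu (ξ : ℝ) := ((hasDerivAt_quinticSoliton hk ξ).ofReal_comp).const_mul c
  have hu' (ξ : ℝ) := ((hasDerivAt_deriv_quinticSoliton hk ξ).ofReal_comp).const_mul c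
  intro x t
  rw [galileanBoost_schrodinger v _ hu hu', norm_galileanBoost, norm_mul, norm_exp_I_mul_ofReal,
    one_mul, norm_real, norm_eq_abs, abs_of_pos (quinticSoliton_pos hk _)]
  simp only [galileanBoost]
  push_cast
  ring
end

section
/- If A: ℝ × ℝ → ℂ is a smooth solution of the quintic nonlinear Schrödinger equation i A_t + A_{xx} ± (3/4)|A|⁴A = 0, then ψ(x,t) = (cos 2t)^{-1/2} exp(-(i/2)x² tan 2t) · A(x/cos 2t, (tan 2t)/2) solves the quintic nonlinear Schrödinger equation with parabolic confinement i ψ_t + ψ_{xx} - x²ψ ± (3/4)|ψ|⁴ψ = 0, for t in any interval where cos 2t > 0. -/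
open Complex Real

theorem stmt_8 (ε : ℝ) (hε : ε = 1 ∨ ε = -1) (A : ℝ → ℝ → ℂ)
    (hA : ContDiff ℝ (⊤ : ℕ∞) (fun p : ℝ × ℝ => A p.1 p.2))
    (hNLS : ∀ x t,
      Complex.I * deriv (fun s => A x s) t +
        deriv (fun y => deriv (fun y' => A y' t) y) x +
        ε * (3 / 4) * ‖A x t‖ ^ 4 * A x t = 0)
    (ψ : ℝ → ℝ → ℂ)
    (hψ : ∀ x t, ψ x t =
      (((Real.sqrt (Real.cos (2 * t)) : ℝ) : ℂ))⁻¹ *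
        Complex.exp (-(Complex.I / 2) * (x ^ 2 : ℝ) * (Real.tan (2 * t) : ℝ)) *
        A (x / Real.cos (2 * t)) (Real.tan (2 * t) / 2)) :
    ∀ x t, 0 < Real.cos (2 * t) →
      Complex.I * deriv (fun s => ψ x s) t +
        deriv (fun y => deriv (fun y' => ψ y' t) y) x -
        (x ^ 2 : ℝ) * ψ x t +
        ε * (3 / 4) * ‖ψ x t‖ ^ 4 * ψ x t = 0 := by
  have hF' : ContDiff ℝ (⊤ : ℕ∞) (fun p : ℝ × ℝ => A p.1 p.2) := hA
  set F : ℝ × ℝ → ℂ := fun p => A p.1 p.2 with hFdef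
  have hFd : Differentiable ℝ F := hF'.differentiable (by simp)
  have hFx_cd : ContDiff ℝ (⊤ : ℕ∞) (fun p : ℝ × ℝ => fderiv ℝ F p (1, 0)) :=
    (hF'.fderiv_right (by simp)).clm_apply contDiff_const
  have hFxd : Differentiable ℝ (fun p : ℝ × ℝ => fderiv ℝ F p (1, 0)) :=
    hFx_cd.differentiable (by simp)
  have keyX : ∀ (G : ℝ × ℝ → ℂ), Differentiable ℝ G → ∀ (a b : ℝ),
      HasDerivAt (fun y => G (y, b)) (fderiv ℝ G (a, b) (1, 0)) a := by
    intro G hG a b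
    exact (hG (a, b)).hasFDerivAt.comp_hasDerivAt a
      ((hasDerivAt_id a).prodMk (hasDerivAt_const a b))
  have keyT : ∀ (a b : ℝ), HasDerivAt (fun s => F (a, s)) (fderiv ℝ F (a, b) (0, 1)) b := by
    intro a b
    exact (hFd (a, b)).hasFDerivAt.comp_hasDerivAt b
      ((hasDerivAt_const b a).prodMk (hasDerivAt_id b))
  have hlinL : ∀ (L : ℝ × ℝ →L[ℝ] ℂ) (a b : ℝ),
      L (a, b) = (a : ℂ) * L (1, 0) + (b : ℂ) * L (0, 1) := by
    intro L a b
    have h : (a, b) = a • ((1:ℝ), (0:ℝ)) + b • ((0:ℝ), (1:ℝ)) := by simp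
    rw [h, map_add, map_smul, map_smul, Complex.real_smul, Complex.real_smul]
  have keyC : ∀ (G : ℝ × ℝ → ℂ), Differentiable ℝ G → ∀ (a b q : ℝ),
      HasDerivAt (fun y => G (y / q, b)) (((q : ℂ))⁻¹ * fderiv ℝ G (a / q, b) (1, 0)) a := by
    intro G hG a b q
    have h2 := (hG (a / q, b)).hasFDerivAt.comp_hasDerivAt a
      (((hasDerivAt_id a).div_const q).prodMk (hasDerivAt_const a b))
    have h3 : fderiv ℝ G (a / q, b) ((1 / q : ℝ), (0:ℝ))
        = ((q : ℂ))⁻¹ * fderiv ℝ G (a / q, b) (1, 0) := by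
      rw [hlinL]; push_cast; ring
    rwa [h3] at h2
  intro x t hc
  -- abbreviations (plain terms, no set, to keep syntactic control)
  have hc0 : Real.cos (2 * t) ≠ 0 := ne_of_gt hc
  have hr0 : Real.sqrt (Real.cos (2 * t)) ≠ 0 := ne_of_gt (Real.sqrt_pos.mpr hc)
  have hR0 : ((Real.sqrt (Real.cos (2 * t)) : ℝ) : ℂ) ≠ 0 := by exact_mod_cast hr0
  have hC0 : ((Real.cos (2 * t) : ℝ) : ℂ) ≠ 0 := by exact_mod_cast hc0
  -- first x-derivative of ψ slice, at every point y
  have hψx : ∀ y : ℝ, HasDerivAt (fun y' => ψ y' t)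
      (((Real.sqrt (Real.cos (2*t)) : ℝ) : ℂ)⁻¹ *
        Complex.exp (-(Complex.I / 2) * ((y ^ 2 : ℝ) : ℂ) * ((Real.tan (2 * t) : ℝ) : ℂ)) *
        (-(Complex.I) * ((Real.tan (2*t) : ℝ) : ℂ) * (y : ℂ) * F (y / Real.cos (2*t), Real.tan (2*t) / 2)
          + (((Real.cos (2*t) : ℝ) : ℂ))⁻¹ *
            fderiv ℝ F (y / Real.cos (2*t), Real.tan (2*t) / 2) (1, 0))) y := by
    intro y
    have hfun : (fun y' => ψ y' t) = fun y' =>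
        (((Real.sqrt (Real.cos (2 * t)) : ℝ) : ℂ))⁻¹ *
          Complex.exp (-(Complex.I / 2) * ((y' ^ 2 : ℝ) : ℂ) * ((Real.tan (2 * t) : ℝ) : ℂ)) *
          F (y' / Real.cos (2 * t), Real.tan (2 * t) / 2) := funext fun y' => hψ y' t
    rw [hfun]
    have hpow := (hasDerivAt_pow 2 y).ofReal_comp (z := y)
    have harg := (hpow.const_mul (-(Complex.I / 2))).mul_const ((Real.tan (2 * t) : ℝ) : ℂ)
    have hE := harg.cexp
    have hKE := hE.const_mul ((((Real.sqrt (Real.cos (2 * t)) : ℝ) : ℂ))⁻¹)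
    have hFsl := keyC F hFd y (Real.tan (2 * t) / 2) (Real.cos (2 * t))
    have hraw := hKE.mul hFsl
    refine hraw.congr_deriv ?_
    push_cast
    ring
  -- second x-derivative
  have hDXX : HasDerivAt (fun y : ℝ =>
      ((Real.sqrt (Real.cos (2*t)) : ℝ) : ℂ)⁻¹ *
        Complex.exp (-(Complex.I / 2) * ((y ^ 2 : ℝ) : ℂ) * ((Real.tan (2 * t) : ℝ) : ℂ)) *
        (-(Complex.I) * ((Real.tan (2*t) : ℝ) : ℂ) * (y : ℂ) * F (y / Real.cos (2*t), Real.tan (2*t) / 2)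
          + (((Real.cos (2*t) : ℝ) : ℂ))⁻¹ *
            fderiv ℝ F (y / Real.cos (2*t), Real.tan (2*t) / 2) (1, 0)))
      (((Real.sqrt (Real.cos (2*t)) : ℝ) : ℂ)⁻¹ *
        Complex.exp (-(Complex.I / 2) * ((x ^ 2 : ℝ) : ℂ) * ((Real.tan (2 * t) : ℝ) : ℂ)) *
        (Complex.I ^ 2 * ((Real.tan (2*t) : ℝ) : ℂ) ^ 2 * (x : ℂ) ^ 2 * F (x / Real.cos (2*t), Real.tan (2*t) / 2)
          - Complex.I * ((Real.tan (2*t) : ℝ) : ℂ) * F (x / Real.cos (2*t), Real.tan (2*t) / 2)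
          - 2 * Complex.I * ((Real.tan (2*t) : ℝ) : ℂ) * (x : ℂ) * (((Real.cos (2*t) : ℝ) : ℂ))⁻¹ *
              fderiv ℝ F (x / Real.cos (2*t), Real.tan (2*t) / 2) (1, 0)
          + (((Real.cos (2*t) : ℝ) : ℂ))⁻¹ * (((Real.cos (2*t) : ℝ) : ℂ))⁻¹ *
              fderiv ℝ (fun p : ℝ × ℝ => fderiv ℝ F p (1, 0)) (x / Real.cos (2*t), Real.tan (2*t) / 2) (1, 0))) x := by
    have hpow := (hasDerivAt_pow 2 x).ofReal_comp (z := x)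
    have harg := (hpow.const_mul (-(Complex.I / 2))).mul_const ((Real.tan (2 * t) : ℝ) : ℂ)
    have hE := harg.cexp
    have hKE := hE.const_mul ((((Real.sqrt (Real.cos (2 * t)) : ℝ) : ℂ))⁻¹)
    have hid : HasDerivAt (fun y : ℝ => (y : ℂ)) 1 x := by
      simpa using (hasDerivAt_id x).ofReal_comp (z := x)
    have hlin1 := hid.const_mul (-(Complex.I) * ((Real.tan (2*t) : ℝ) : ℂ))
    have hFsl := keyC F hFd x (Real.tan (2 * t) / 2) (Real.cos (2 * t))
    have hN := hlin1.mul hFsl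
    have hFxsl := keyC (fun p : ℝ × ℝ => fderiv ℝ F p (1, 0)) hFxd x (Real.tan (2 * t) / 2) (Real.cos (2 * t))
    have hM := hFxsl.const_mul ((((Real.cos (2*t) : ℝ) : ℂ))⁻¹)
    have hraw := hKE.mul (hN.add hM)
    refine hraw.congr_deriv ?_
    simp only [Pi.add_apply, Pi.mul_apply]
    push_cast
    ring
  -- time derivative
  have hDT : HasDerivAt (fun s => ψ x s)
      (((Real.sin (2*t) : ℝ) : ℂ) * (((Real.sqrt (Real.cos (2*t)) : ℝ) : ℂ)⁻¹) ^ 3 *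
          Complex.exp (-(Complex.I / 2) * ((x ^ 2 : ℝ) : ℂ) * ((Real.tan (2 * t) : ℝ) : ℂ)) *
          F (x / Real.cos (2*t), Real.tan (2*t) / 2)
        + ((Real.sqrt (Real.cos (2*t)) : ℝ) : ℂ)⁻¹ *
          (Complex.exp (-(Complex.I / 2) * ((x ^ 2 : ℝ) : ℂ) * ((Real.tan (2 * t) : ℝ) : ℂ)) *
            (-(Complex.I) * (x : ℂ) ^ 2 * ((((Real.cos (2*t) : ℝ) : ℂ))⁻¹) ^ 2)) *
          F (x / Real.cos (2*t), Real.tan (2*t) / 2)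
        + ((Real.sqrt (Real.cos (2*t)) : ℝ) : ℂ)⁻¹ *
          Complex.exp (-(Complex.I / 2) * ((x ^ 2 : ℝ) : ℂ) * ((Real.tan (2 * t) : ℝ) : ℂ)) *
          (2 * (x : ℂ) * ((Real.sin (2*t) : ℝ) : ℂ) * ((((Real.cos (2*t) : ℝ) : ℂ))⁻¹) ^ 2 *
              fderiv ℝ F (x / Real.cos (2*t), Real.tan (2*t) / 2) (1, 0)
            + ((((Real.cos (2*t) : ℝ) : ℂ))⁻¹) ^ 2 *
              fderiv ℝ F (x / Real.cos (2*t), Real.tan (2*t) / 2) (0, 1))) t := by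
    have hfun : (fun s => ψ x s) = fun s =>
        (((Real.sqrt (Real.cos (2 * s)) : ℝ) : ℂ))⁻¹ *
          Complex.exp (-(Complex.I / 2) * ((x ^ 2 : ℝ) : ℂ) * ((Real.tan (2 * s) : ℝ) : ℂ)) *
          F (x / Real.cos (2 * s), Real.tan (2 * s) / 2) := funext fun s => hψ x s
    rw [hfun]
    have h2s : HasDerivAt (fun s : ℝ => 2 * s) (2 * 1) t := (hasDerivAt_id t).const_mul 2
    have h_cos : HasDerivAt (fun s => Real.cos (2 * s)) (-Real.sin (2*t) * (2*1)) t :=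
      (Real.hasDerivAt_cos (2*t)).comp t h2s
    have h_sqrt : HasDerivAt (fun s => Real.sqrt (Real.cos (2 * s)))
        (1 / (2 * Real.sqrt (Real.cos (2*t))) * (-Real.sin (2*t) * (2*1))) t :=
      (Real.hasDerivAt_sqrt hc0).comp t h_cos
    have h_invC' := (hasDerivAt_const t (1:ℂ)).div (h_sqrt.ofReal_comp) hR0
    simp only [one_div] at h_invC'
    have h_invC := h_invC'
    have h_tan : HasDerivAt (fun s => Real.tan (2 * s)) (1 / Real.cos (2*t) ^ 2 * (2*1)) t :=
      (Real.hasDerivAt_tan hc0).comp t h2s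
    have h_exparg := (h_tan.ofReal_comp).const_mul (-(Complex.I / 2) * ((x ^ 2 : ℝ) : ℂ))
    have h_exp := h_exparg.cexp
    have h_div : HasDerivAt (fun s => x / Real.cos (2 * s))
        ((0 * Real.cos (2*t) - x * (-Real.sin (2*t) * (2*1))) / Real.cos (2*t) ^ 2) t :=
      (hasDerivAt_const t x).div h_cos hc0
    have h_tanh := h_tan.div_const 2
    have h_curve := h_div.prodMk h_tanh
    have h_Fc := (hFd (x / Real.cos (2*t), Real.tan (2*t) / 2)).hasFDerivAt.comp_hasDerivAt t h_curve
    rw [hlinL] at h_Fc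
    simp only [Function.comp_def] at h_Fc
    have hraw := (h_invC.mul h_exp).mul h_Fc
    refine (hraw.congr_of_eventuallyEq (Filter.Eventually.of_forall fun s => ?_)).congr_deriv ?_
    · simp only [Pi.mul_apply, Pi.div_apply, one_div]
    simp only [Pi.mul_apply, Pi.div_apply, one_div]
    push_cast [-Complex.ofReal_cos, -Complex.ofReal_sin, -Complex.ofReal_tan]
    ring
  -- NLS at the transformed point
  have hNLSF : Complex.I * fderiv ℝ F (x / Real.cos (2*t), Real.tan (2*t)/2) (0,1)
      + fderiv ℝ (fun p : ℝ×ℝ => fderiv ℝ F p (1,0)) (x / Real.cos (2*t), Real.tan (2*t)/2) (1,0)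
      + (ε : ℂ) * (3/4) * ((‖F (x / Real.cos (2*t), Real.tan (2*t)/2)‖ : ℝ) : ℂ)^4
          * F (x / Real.cos (2*t), Real.tan (2*t)/2) = 0 := by
    have h := hNLS (x / Real.cos (2*t)) (Real.tan (2*t)/2)
    have e1 : deriv (fun s => A (x / Real.cos (2*t)) s) (Real.tan (2*t)/2)
        = fderiv ℝ F (x / Real.cos (2*t), Real.tan (2*t)/2) (0,1) := (keyT _ _).deriv
    have einner : (fun y : ℝ => deriv (fun y' => A y' (Real.tan (2*t)/2)) y)
        = fun y : ℝ => fderiv ℝ F (y, Real.tan (2*t)/2) (1,0) :=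
      funext fun y => (keyX F hFd y _).deriv
    have e2 : deriv (fun y => deriv (fun y' => A y' (Real.tan (2*t)/2)) y) (x / Real.cos (2*t))
        = fderiv ℝ (fun p : ℝ×ℝ => fderiv ℝ F p (1,0)) (x / Real.cos (2*t), Real.tan (2*t)/2) (1,0) := by
      rw [einner]; exact (keyX (fun p => fderiv ℝ F p (1,0)) hFxd _ _).deriv
    rw [e1, e2] at h
    exact h
  have hψF : ψ x t = (((Real.sqrt (Real.cos (2 * t)) : ℝ) : ℂ))⁻¹ *
      Complex.exp (-(Complex.I / 2) * ((x ^ 2 : ℝ) : ℂ) * ((Real.tan (2 * t) : ℝ) : ℂ)) *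
      F (x / Real.cos (2 * t), Real.tan (2 * t) / 2) := hψ x t
  have habs : ‖ψ x t‖
      = (Real.sqrt (Real.cos (2*t)))⁻¹ * ‖F (x / Real.cos (2*t), Real.tan (2*t)/2)‖ := by
    rw [hψF, norm_mul, norm_mul, norm_inv, Complex.norm_real, Complex.norm_exp]
    have hre : (-(Complex.I/2) * ((x^2 : ℝ) : ℂ) * ((Real.tan (2*t) : ℝ) : ℂ)).re = 0 := by simp [-Complex.ofReal_tan, -Complex.ofReal_pow]
    rw [hre]
    simp [_root_.abs_of_nonneg (Real.sqrt_nonneg _)]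
  have hd2 : deriv (fun y => deriv (fun y' => ψ y' t) y) x
      = (((Real.sqrt (Real.cos (2*t)) : ℝ) : ℂ)⁻¹ *
        Complex.exp (-(Complex.I / 2) * ((x ^ 2 : ℝ) : ℂ) * ((Real.tan (2 * t) : ℝ) : ℂ)) *
        (Complex.I ^ 2 * ((Real.tan (2*t) : ℝ) : ℂ) ^ 2 * (x : ℂ) ^ 2 * F (x / Real.cos (2*t), Real.tan (2*t) / 2)
          - Complex.I * ((Real.tan (2*t) : ℝ) : ℂ) * F (x / Real.cos (2*t), Real.tan (2*t) / 2)
          - 2 * Complex.I * ((Real.tan (2*t) : ℝ) : ℂ) * (x : ℂ) * (((Real.cos (2*t) : ℝ) : ℂ))⁻¹ *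
              fderiv ℝ F (x / Real.cos (2*t), Real.tan (2*t) / 2) (1, 0)
          + (((Real.cos (2*t) : ℝ) : ℂ))⁻¹ * (((Real.cos (2*t) : ℝ) : ℂ))⁻¹ *
              fderiv ℝ (fun p : ℝ × ℝ => fderiv ℝ F p (1, 0)) (x / Real.cos (2*t), Real.tan (2*t) / 2) (1, 0))) := by
    have h1 : (fun y => deriv (fun y' => ψ y' t) y) = (fun y : ℝ =>
      ((Real.sqrt (Real.cos (2*t)) : ℝ) : ℂ)⁻¹ *
        Complex.exp (-(Complex.I / 2) * ((y ^ 2 : ℝ) : ℂ) * ((Real.tan (2 * t) : ℝ) : ℂ)) *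
        (-(Complex.I) * ((Real.tan (2*t) : ℝ) : ℂ) * (y : ℂ) * F (y / Real.cos (2*t), Real.tan (2*t) / 2)
          + (((Real.cos (2*t) : ℝ) : ℂ))⁻¹ *
            fderiv ℝ F (y / Real.cos (2*t), Real.tan (2*t) / 2) (1, 0))) :=
      funext fun y => (hψx y).deriv
    rw [h1]
    exact hDXX.deriv
  rw [hDT.deriv, hd2, habs, hψF]
  have hR2 : ((Real.sqrt (Real.cos (2*t)) : ℝ) : ℂ)^2 = ((Real.cos (2*t) : ℝ) : ℂ) := by
    rw [← Complex.ofReal_pow, Real.sq_sqrt hc.le]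
  have hS2 : ((Real.sin (2*t) : ℝ) : ℂ)^2 + ((Real.cos (2*t) : ℝ) : ℂ)^2 = 1 := by
    exact_mod_cast Real.sin_sq_add_cos_sq (2*t)
  have hTC : ((Real.tan (2*t) : ℝ) : ℂ) * ((Real.cos (2*t) : ℝ) : ℂ) = ((Real.sin (2*t) : ℝ) : ℂ) := by
    exact_mod_cast Real.tan_mul_cos hc0
  simp only [Complex.ofReal_pow, Complex.ofReal_mul, Complex.ofReal_inv]
  set R : ℂ := ((Real.sqrt (Real.cos (2*t)) : ℝ) : ℂ) with hRdef
  set C : ℂ := ((Real.cos (2*t) : ℝ) : ℂ) with hCdef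
  set S : ℂ := ((Real.sin (2*t) : ℝ) : ℂ) with hSdef
  set T : ℂ := ((Real.tan (2*t) : ℝ) : ℂ) with hTdef
  set E : ℂ := Complex.exp (-(Complex.I / 2) * (x:ℂ)^2 * T) with hEdef
  set FV : ℂ := F (x / Real.cos (2*t), Real.tan (2*t) / 2) with hFVdef
  set FX : ℂ := fderiv ℝ F (x / Real.cos (2*t), Real.tan (2*t) / 2) (1, 0) with hFXdef
  set FT : ℂ := fderiv ℝ F (x / Real.cos (2*t), Real.tan (2*t) / 2) (0, 1) with hFTdef
  set FXX : ℂ := fderiv ℝ (fun p : ℝ × ℝ => fderiv ℝ F p (1, 0)) (x / Real.cos (2*t), Real.tan (2*t) / 2) (1, 0) with hFXXdef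
  set aF : ℂ := ((‖F (x / Real.cos (2*t), Real.tan (2*t) / 2)‖ : ℝ) : ℂ) with haFdef
  have hC0' : C ≠ 0 := hC0
  have hR0' : R ≠ 0 := hR0
  have pQ2 : Complex.I * (2*(x:ℂ)*S*(C⁻¹)^2) - 2*Complex.I*T*(x:ℂ)*C⁻¹ = 0 := by
    have hCi : C * C⁻¹ = 1 := mul_inv_cancel₀ hC0'
    rw [← hTC]
    linear_combination (2*Complex.I*T*(x:ℂ)*C⁻¹) * hCi
  have pQ1 : Complex.I*S*(R⁻¹)^2 - Complex.I^2*(x:ℂ)^2*(C⁻¹)^2 + Complex.I^2*T^2*(x:ℂ)^2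
      - Complex.I*T - (x:ℂ)^2 + (ε:ℂ)*(3/4)*aF^4*((R⁻¹)^4 - (C⁻¹)^2) = 0 := by
    have hCi : C * C⁻¹ = 1 := mul_inv_cancel₀ hC0'
    have hu : (R⁻¹)^2 = C⁻¹ := by rw [inv_pow, hR2]
    have hT : T = S * C⁻¹ := by rw [← hTC, mul_inv_cancel_right₀ hC0']
    rw [hT, Complex.I_sq]
    linear_combination (Complex.I*S + (ε:ℂ)*(3/4)*aF^4*((R⁻¹)^2 + C⁻¹)) * hu
      + (-((x:ℂ)^2) * (C⁻¹)^2) * hS2 + ((x:ℂ)^2*(C*C⁻¹+1)) * hCi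
  linear_combination (E * R⁻¹ * (C⁻¹)^2) * hNLSF + (E * R⁻¹ * FX) * pQ2 + (E * R⁻¹ * FV) * pQ1
end

section
/- With (δx)² = (π²/(4k)²)cos² 2t and (δp)² = (π²/(4k)²)sin² 2t + k²/(2cos² 2t), the uncertainty product obeys (δp)²(δx)² = (π²/32)(1 + (π²/(32k⁴)) sin² 4t) ≥ π²/32 > 1/4, for all t with cos 2t ≠ 0 and k > 0. -/
open Real

theorem stmt_11 (k t : ℝ) (hk : 0 < k) (hcos : Real.cos (2 * t) ≠ 0)
    (δx2 δp2 : ℝ)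
    (hδx2 : δx2 = (Real.pi ^ 2 / (16 * k ^ 2)) * (Real.cos (2 * t)) ^ 2)
    (hδp2 : δp2 = (Real.pi ^ 2 / (16 * k ^ 2)) * (Real.sin (2 * t)) ^ 2 +
      k ^ 2 / (2 * (Real.cos (2 * t)) ^ 2)) :
    δp2 * δx2 = (Real.pi ^ 2 / 32) *
      (1 + (Real.pi ^ 2 / (32 * k ^ 4)) * (Real.sin (4 * t)) ^ 2) ∧
    Real.pi ^ 2 / 32 ≤ δp2 * δx2 ∧ (1 : ℝ) / 4 < Real.pi ^ 2 / 32 := by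
  have h4 : Real.sin (4 * t) = 2 * Real.sin (2 * t) * Real.cos (2 * t) := by
    have : (4 : ℝ) * t = 2 * (2 * t) := by ring
    rw [this, Real.sin_two_mul]
  have hk' : k ≠ 0 := ne_of_gt hk
  have heq : δp2 * δx2 = (Real.pi ^ 2 / 32) *
      (1 + (Real.pi ^ 2 / (32 * k ^ 4)) * (Real.sin (4 * t)) ^ 2) := by
    rw [hδx2, hδp2, h4]
    field_simp
    ring
  refine ⟨heq, ?_, ?_⟩
  · rw [heq]
    have h1 : 0 ≤ (Real.pi ^ 2 / (32 * k ^ 4)) * (Real.sin (4 * t)) ^ 2 := by positivity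
    nlinarith [Real.pi_pos, sq_nonneg Real.pi]
  · nlinarith [Real.pi_gt_three]
end

section
/- ∫_{-∞}^{∞} u² / cosh u du = π³/4. -/
open Real MeasureTheory Set
open scoped Nat

/-!
For `t > 0` expand `1 / cosh t = 2 ∑ (-1)ⁿ e^{-(2n+1)t}` as a geometric series and integrate
`t²` against it term by term over `(0, ∞)`: since `∫₀^∞ t² e^{-at} dt = 2 / a³`, this gives
`4 β(3)` with `β(3) = ∑ (-1)ⁿ / (2n+1)³ = π³/32`, the value at `3` of the `L`-function of the
nontrivial character mod `4`. The integrand is even, so the integral over `ℝ` is `8 β(3)`.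
-/

lemma integral_pow_mul_exp_neg_mul_Ioi (k : ℕ) {c : ℝ} (hc : 0 < c) :
    ∫ t in Ioi (0 : ℝ), t ^ k * exp (-(c * t)) = k ! / c ^ (k + 1) := by
  have key := integral_rpow_mul_exp_neg_mul_Ioi (by positivity : (0 : ℝ) < k + 1) hc
  rw [add_sub_cancel_right, Gamma_nat_eq_factorial, one_div, inv_rpow hc.le] at key
  simp_rw [rpow_natCast] at key
  rw [key]
  norm_cast
  field_simp

lemma integrableOn_pow_mul_exp_neg_mul_Ioi (k : ℕ) {c : ℝ} (hc : 0 < c) :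
    IntegrableOn (fun t : ℝ => t ^ k * exp (-(c * t))) (Ioi 0) :=
  .of_integral_ne_zero (by rw [integral_pow_mul_exp_neg_mul_Ioi k hc]; positivity)

lemma hasSum_inv_cosh {t : ℝ} (ht : 0 < t) :
    HasSum (fun n : ℕ => 2 * (-1) ^ n * exp (-((2 * n + 1) * t))) (cosh t)⁻¹ := by
  have hr : ‖-exp (-(2 * t))‖ < 1 := by
    rw [norm_neg, norm_of_nonneg (exp_pos _).le, exp_lt_one_iff]
    linarith
  have hterm (n : ℕ) : 2 * exp (-t) * (-exp (-(2 * t))) ^ n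
      = 2 * (-1) ^ n * exp (-((2 * n + 1) * t)) := by
    rw [neg_pow, ← exp_nat_mul, show -((2 * n + 1) * t) = -t + n * -(2 * t) by ring, exp_add]
    ring
  have hsum : 2 * exp (-t) * (1 - -exp (-(2 * t)))⁻¹ = (cosh t)⁻¹ := by
    rw [cosh_eq, sub_neg_eq_add, show -(2 * t) = -t + -t by ring, exp_add]
    have : exp t * exp (-t) = 1 := by rw [← exp_add, add_neg_cancel, exp_zero]
    field_simp
    linear_combination this
  simpa only [hterm, hsum] using (hasSum_geometric_of_norm_lt_one hr).mul_left (2 * exp (-t))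

lemma sin_pi_mul_two_mul_add_one_div_two (k : ℕ) :
    sin (π * ((2 * k + 1 : ℕ) : ℝ) / 2) = (-1) ^ k := by
  rw [← cos_nat_mul_pi, ← sin_add_pi_div_two]
  push_cast
  ring_nf

lemma hasSum_alternating_inv_odd_cube :
    HasSum (fun k : ℕ => (-1) ^ k / (2 * k + 1 : ℝ) ^ 3) (π ^ 3 / 32) := by
  have hinj : Function.Injective (fun k : ℕ => 2 * k + 1) := fun a b h => by simpa using h
  have hsupp : ∀ n ∉ range (fun k : ℕ => 2 * k + 1),
      (1 : ℝ) / (n : ℝ) ^ 3 * sin (π * n / 2) = 0 := by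
    intro n hn
    obtain ⟨m, rfl | rfl⟩ := Nat.even_or_odd' n
    · rw [Nat.cast_mul, Nat.cast_two, mul_div_assoc, mul_div_cancel_left₀ _ two_ne_zero,
        mul_comm π, sin_nat_mul_pi, mul_zero]
    · exact absurd ⟨m, rfl⟩ hn
  convert (hinj.hasSum_iff hsupp).mpr hasSum_L_function_mod_four_eval_three using 1
  ext k
  simp only [Function.comp_apply, sin_pi_mul_two_mul_add_one_div_two]
  push_cast
  ring

lemma integral_Ioi_sq_div_cosh : ∫ t in Ioi (0 : ℝ), t ^ 2 / cosh t = π ^ 3 / 8 := by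
  set F : ℕ → ℝ → ℝ := fun n t => 2 * (-1) ^ n * (t ^ 2 * exp (-((2 * n + 1) * t)))
  have hc (n : ℕ) : (0 : ℝ) < 2 * n + 1 := by positivity
  have hF_int (n : ℕ) : IntegrableOn (F n) (Ioi 0) :=
    (integrableOn_pow_mul_exp_neg_mul_Ioi 2 (hc n)).const_mul _
  have hF_integral (n : ℕ) : ∫ t in Ioi 0, F n t = 4 * ((-1) ^ n / (2 * n + 1) ^ 3) := by
    simp only [F, integral_const_mul, integral_pow_mul_exp_neg_mul_Ioi 2 (hc n)]
    norm_num
    ring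
  have hF_norm (n : ℕ) : ∫ t in Ioi 0, ‖F n t‖ = |4 * ((-1) ^ n / (2 * n + 1 : ℝ) ^ 3)| := by
    have (t : ℝ) : ‖F n t‖ = 2 * (t ^ 2 * exp (-((2 * n + 1) * t))) := by simp [F]
    simp only [this, integral_const_mul, integral_pow_mul_exp_neg_mul_Ioi 2 (hc n), abs_mul,
      abs_div, abs_pow, abs_neg, abs_one, one_pow, abs_of_pos (hc n)]
    norm_num
    ring
  have hβ := hasSum_alternating_inv_odd_cube.mul_left 4
  -- `Summable` over `ℝ` means absolutely summable, so the alternating series bounds the norms.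
  have hF_sum : HasSum (fun n => ∫ t in Ioi 0, F n t) (∫ t in Ioi 0, ∑' n, F n t) :=
    hasSum_integral_of_summable_integral_norm hF_int
      (by simpa only [hF_norm] using hβ.summable.abs)
  have hpt : ∀ t ∈ Ioi (0 : ℝ), t ^ 2 / cosh t = ∑' n, F n t := fun t ht => by
    rw [div_eq_mul_inv, ← ((hasSum_inv_cosh ht).mul_left (t ^ 2)).tsum_eq]
    exact tsum_congr fun n => mul_left_comm _ _ _
  rw [setIntegral_congr_fun measurableSet_Ioi hpt,
    hF_sum.unique (by simpa only [hF_integral] using hβ)]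
  ring

theorem stmt_13 : ∫ u : ℝ, u ^ 2 / Real.cosh u = Real.pi ^ 3 / 4 := by
  have heven := integral_comp_abs (f := fun t => t ^ 2 / cosh t)
  simp only [sq_abs, cosh_abs] at heven
  rw [heven, integral_Ioi_sq_div_cosh]
  ring
end

section
/- For all real ω, ∫_{-∞}^{∞} e^{iωs}/√(cosh s) ds = Γ(1/4 + iω/2)·Γ(1/4 - iω/2)/√(2π). -/
/-!
Substituting `x = σ(2s) = eˢ / (2 cosh s)`, so that `1 - x = e⁻ˢ / (2 cosh s)` and
`dx = 2x(1 - x) ds`, turns Euler's Beta integral into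
`B(u, v) = 2 ∫ e^{(u - v)s} (2 cosh s)^{-(u + v)} ds`.
For `u, v = 1/4 ± iω/2` this is `√2` times the integral in question, while
`Γ(u) Γ(v) = Γ(1/2) B(u, v) = √π B(u, v)`.
-/

open Complex Real MeasureTheory Set

namespace Real

lemma sigmoid_two_mul (s : ℝ) : sigmoid (2 * s) = exp s / (2 * cosh s) := by
  rw [sigmoid_def, cosh_eq, show -(2 * s) = -s + -s by ring, exp_add]
  field_simp
  rw [add_mul, one_mul, sq, mul_assoc, ← exp_add]
  simp

lemma one_sub_sigmoid_two_mul (s : ℝ) : 1 - sigmoid (2 * s) = exp (-s) / (2 * cosh s) := by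
  rw [← sigmoid_neg, ← mul_neg, sigmoid_two_mul, cosh_neg]

lemma log_sigmoid_two_mul (s : ℝ) : log (sigmoid (2 * s)) = s - log (2 * cosh s) := by
  rw [sigmoid_two_mul, log_div (exp_pos s).ne' (by positivity), log_exp]

lemma log_one_sub_sigmoid_two_mul (s : ℝ) :
    log (1 - sigmoid (2 * s)) = -s - log (2 * cosh s) := by
  rw [one_sub_sigmoid_two_mul, log_div (exp_pos _).ne' (by positivity), log_exp]

lemma hasDerivAt_sigmoid_two_mul (s : ℝ) :
    HasDerivAt (fun t => sigmoid (2 * t)) (2 * (sigmoid (2 * s) * (1 - sigmoid (2 * s)))) s :=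
  ((hasDerivAt_sigmoid (2 * s)).comp s ((hasDerivAt_id s).const_mul 2)).congr_deriv
    (by simp [mul_comm])

lemma image_univ_sigmoid_two_mul : (fun s => sigmoid (2 * s)) '' univ = Ioo 0 1 := by
  rw [image_univ, ← range_sigmoid]
  exact (mul_left_surjective₀ two_ne_zero).range_comp sigmoid

lemma injective_sigmoid_two_mul : Function.Injective fun s => sigmoid (2 * s) :=
  sigmoid_injective.comp (mul_right_injective₀ two_ne_zero)

end Real

namespace Complex

lemma ofReal_cpow_of_pos {a : ℝ} (ha : 0 < a) (w : ℂ) :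
    (a : ℂ) ^ w = cexp (Real.log a * w) := by
  rw [cpow_def_of_ne_zero (ofReal_ne_zero.mpr ha.ne'), ofReal_log ha.le]

lemma ofReal_mul_cpow_sub_one_of_pos {a : ℝ} (ha : 0 < a) (w : ℂ) :
    (a : ℂ) * (a : ℂ) ^ (w - 1) = (a : ℂ) ^ w := by
  have ha' : (a : ℂ) ≠ 0 := ofReal_ne_zero.mpr ha.ne'
  rw [cpow_sub _ _ ha', cpow_one, mul_div_cancel₀ _ ha']

lemma ofReal_cpow_one_half {x : ℝ} (hx : 0 ≤ x) : (x : ℂ) ^ (1 / 2 : ℂ) = (√x : ℂ) := by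
  rw [Real.sqrt_eq_rpow, ofReal_cpow hx]
  norm_num

lemma abs_deriv_smul_betaIntegrand_sigmoid_two_mul (u v : ℂ) (s : ℝ) :
    |2 * (sigmoid (2 * s) * (1 - sigmoid (2 * s)))| •
        ((sigmoid (2 * s) : ℂ) ^ (u - 1) * (1 - (sigmoid (2 * s) : ℂ)) ^ (v - 1)) =
      2 * (cexp ((u - v) * s) / ((2 * Real.cosh s : ℝ) : ℂ) ^ (u + v)) := by
  have hx : 0 < sigmoid (2 * s) := sigmoid_pos _
  have hx' : 0 < 1 - sigmoid (2 * s) := sub_pos.mpr (sigmoid_lt_one _)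
  calc _ = 2 * ((sigmoid (2 * s) : ℂ) * (sigmoid (2 * s) : ℂ) ^ (u - 1)) *
        (((1 - sigmoid (2 * s) : ℝ) : ℂ) * ((1 - sigmoid (2 * s) : ℝ) : ℂ) ^ (v - 1)) := by
        rw [abs_of_pos (by positivity), real_smul]
        push_cast
        ring
    _ = 2 * cexp ((s - Real.log (2 * Real.cosh s)) * u +
          (-s - Real.log (2 * Real.cosh s)) * v) := by
        rw [ofReal_mul_cpow_sub_one_of_pos hx, ofReal_mul_cpow_sub_one_of_pos hx',
          ofReal_cpow_of_pos hx, ofReal_cpow_of_pos hx', log_sigmoid_two_mul,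
          log_one_sub_sigmoid_two_mul, Complex.exp_add]
        push_cast
        ring
    _ = _ := by
        rw [ofReal_cpow_of_pos (by positivity), ← Complex.exp_sub]
        ring_nf

/- No integrability hypothesis: the change of variables formula also holds when neither side is
integrable, both integrals being `0` then. -/
theorem betaIntegral_eq_integral_exp_div_cosh_cpow (u v : ℂ) :
    betaIntegral u v =
      2 * ∫ s : ℝ, cexp ((u - v) * s) / ((2 * Real.cosh s : ℝ) : ℂ) ^ (u + v) := by
  rw [betaIntegral, intervalIntegral.integral_of_le zero_le_one, integral_Ioc_eq_integral_Ioo,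
    ← image_univ_sigmoid_two_mul, integral_image_eq_integral_abs_deriv_smul MeasurableSet.univ
      (fun s _ => (hasDerivAt_sigmoid_two_mul s).hasDerivWithinAt) injective_sigmoid_two_mul.injOn,
    setIntegral_univ, ← integral_const_mul]
  exact integral_congr_ae (.of_forall (abs_deriv_smul_betaIntegrand_sigmoid_two_mul u v))

end Complex

theorem stmt_15 (ω : ℝ) :
    ∫ s : ℝ, Complex.exp (Complex.I * (ω * s : ℝ)) /
        ((Real.sqrt (Real.cosh s) : ℝ) : ℂ) =
      Complex.Gamma (1 / 4 + Complex.I * ω / 2) *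
        Complex.Gamma (1 / 4 - Complex.I * ω / 2) /
        ((Real.sqrt (2 * Real.pi) : ℝ) : ℂ) := by
  set u : ℂ := 1 / 4 + I * ω / 2
  set v : ℂ := 1 / 4 - I * ω / 2
  have hsum : u + v = 1 / 2 := by ring
  have hintegrand (s : ℝ) : cexp ((u - v) * s) / ((2 * Real.cosh s : ℝ) : ℂ) ^ (u + v) =
      (√2 : ℂ)⁻¹ * (cexp (I * (ω * s : ℝ)) / (√(Real.cosh s) : ℂ)) := by
    rw [hsum, ofReal_cpow_one_half (by positivity), Real.sqrt_mul zero_le_two,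
      show u - v = I * ω by ring]
    push_cast
    field_simp
  have hbeta : betaIntegral u v =
      √2 * ∫ s : ℝ, cexp (I * (ω * s : ℝ)) / (√(Real.cosh s) : ℂ) := by
    have h2 : (2 : ℂ) = √2 * √2 := by exact_mod_cast (Real.mul_self_sqrt zero_le_two).symm
    rw [betaIntegral_eq_integral_exp_div_cosh_cpow, integral_congr_ae (.of_forall hintegrand),
      integral_const_mul, ← mul_assoc, h2]
    field_simp
  rw [Gamma_mul_Gamma_eq_betaIntegral (by norm_num [u]) (by norm_num [v]), hsum,
    Complex.Gamma_one_half_eq, ofReal_cpow_one_half pi_pos.le, hbeta, Real.sqrt_mul zero_le_two]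
  push_cast
  field_simp
end

section
/- For the pulse A(x,t) = e^{iφ}(k/cosh(k(x-vt)))^{1/2}exp(i(vx/2 + (k²-v²)t/4)) with k > 0, the averaged energy functional E = (1/π)∫(|A_x|² - (1/4)|A|⁶) dx, after division by the norm, equals v²/4; in particular E ≥ 0. -/
/-!
Write `A = e^{iφ} r e^{iθ}` with `r = √(k sech u)`, `u = k (x - v t)` and `θ' = v / 2`. Then
`|A_x|² = r'² + r² θ'² = (k³/4) sinh² u / cosh³ u + (v² k / 4) sech u` and `|A|⁶ = k³ sech³ u`,
so after substituting `u` both integrals reduce to `∫ sech = π` (substitute `s = sinh u` to get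
`∫ ds / (1 + s²)`) and `∫ sech³ = ∫ sinh² / cosh³ = π / 2`: these two add up to `∫ sech`, and
their difference is the integral of `(sinh / cosh²)' = 2 sech³ - sech`, which vanishes because
`sinh / cosh²` is integrable.
-/

open Complex Real MeasureTheory

lemma abs_sinh_le_cosh (x : ℝ) : |Real.sinh x| ≤ Real.cosh x :=
  abs_le.mpr ⟨by linarith [Real.sinh_lt_cosh (-x), Real.sinh_neg x, Real.cosh_neg x],
    (Real.sinh_lt_cosh x).le⟩

lemma abs_cosh_smul_inv_one_add_sinh_sq (x : ℝ) :
    |Real.cosh x| • (1 + Real.sinh x ^ 2)⁻¹ = (Real.cosh x)⁻¹ := by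
  rw [abs_of_pos (Real.cosh_pos x), ← Real.cosh_sq', smul_eq_mul]
  field_simp

lemma integrable_inv_cosh : Integrable fun x : ℝ => (Real.cosh x)⁻¹ := by
  have h := (integrableOn_image_iff_integrableOn_abs_deriv_smul MeasurableSet.univ
    (fun x _ => (Real.hasDerivAt_sinh x).hasDerivWithinAt) Real.sinh_injective.injOn
    fun y : ℝ => (1 + y ^ 2)⁻¹).mp
  simp only [Set.image_univ, Real.sinh_surjective.range_eq, integrableOn_univ,
    abs_cosh_smul_inv_one_add_sinh_sq] at h
  exact h integrable_inv_one_add_sq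

lemma integral_inv_cosh : ∫ x : ℝ, (Real.cosh x)⁻¹ = π := by
  have h := integral_image_eq_integral_abs_deriv_smul MeasurableSet.univ
    (fun x _ => (Real.hasDerivAt_sinh x).hasDerivWithinAt) Real.sinh_injective.injOn
    fun y : ℝ => (1 + y ^ 2)⁻¹
  simp only [Set.image_univ, Real.sinh_surjective.range_eq, setIntegral_univ,
    abs_cosh_smul_inv_one_add_sinh_sq, integral_univ_inv_one_add_sq] at h
  exact h.symm

lemma integrable_of_le_inv_cosh {f : ℝ → ℝ} (hf : Continuous f)
    (hle : ∀ x, |f x| ≤ (Real.cosh x)⁻¹) : Integrable f :=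
  integrable_inv_cosh.mono' hf.aestronglyMeasurable (Filter.Eventually.of_forall hle)

lemma abs_inv_cosh_pow_three_le (x : ℝ) : |(Real.cosh x)⁻¹ ^ 3| ≤ (Real.cosh x)⁻¹ := by
  have h1 : (Real.cosh x)⁻¹ ≤ 1 := inv_le_one_of_one_le₀ (Real.one_le_cosh x)
  have h0 : 0 ≤ (Real.cosh x)⁻¹ := (inv_pos.mpr (Real.cosh_pos x)).le
  rw [abs_of_nonneg (by positivity)]
  exact pow_le_of_le_one h0 h1 (by norm_num)

lemma abs_sinh_div_cosh_sq_le (x : ℝ) :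
    |Real.sinh x / Real.cosh x ^ 2| ≤ (Real.cosh x)⁻¹ := by
  have hc := Real.cosh_pos x
  rw [abs_div, abs_of_pos (by positivity : 0 < Real.cosh x ^ 2), div_le_iff₀ (by positivity)]
  calc |Real.sinh x| ≤ Real.cosh x := abs_sinh_le_cosh x
    _ = (Real.cosh x)⁻¹ * Real.cosh x ^ 2 := by field_simp

lemma hasDerivAt_sinh_div_cosh_sq (x : ℝ) :
    HasDerivAt (fun y => Real.sinh y / Real.cosh y ^ 2)
      (2 * (Real.cosh x)⁻¹ ^ 3 - (Real.cosh x)⁻¹) x := by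
  have hc := Real.cosh_pos x
  refine ((Real.hasDerivAt_sinh x).div ((Real.hasDerivAt_cosh x).pow 2)
    (pow_ne_zero 2 hc.ne')).congr_deriv ?_
  simp only [Pi.pow_apply]
  field_simp
  linear_combination 2 * Real.cosh x * Real.cosh_sq' x

lemma integrable_inv_cosh_pow_three : Integrable fun x : ℝ => (Real.cosh x)⁻¹ ^ 3 :=
  integrable_of_le_inv_cosh (by fun_prop (disch := exact fun x => by positivity))
    abs_inv_cosh_pow_three_le

lemma integral_inv_cosh_pow_three : ∫ x : ℝ, (Real.cosh x)⁻¹ ^ 3 = π / 2 := by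
  have hcube := integrable_inv_cosh_pow_three
  have h := integral_eq_zero_of_hasDerivAt_of_integrable hasDerivAt_sinh_div_cosh_sq
    ((hcube.const_mul 2).sub integrable_inv_cosh)
    (integrable_of_le_inv_cosh (by fun_prop (disch := exact fun x => by positivity))
      abs_sinh_div_cosh_sq_le)
  rw [integral_sub (hcube.const_mul 2) integrable_inv_cosh, integral_const_mul,
    integral_inv_cosh] at h
  linarith

lemma sinh_sq_div_cosh_cube (x : ℝ) :
    Real.sinh x ^ 2 / Real.cosh x ^ 3 = (Real.cosh x)⁻¹ - (Real.cosh x)⁻¹ ^ 3 := by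
  have hc := Real.cosh_pos x
  field_simp
  linear_combination -Real.cosh_sq' x

lemma integrable_sinh_sq_div_cosh_cube :
    Integrable fun x : ℝ => Real.sinh x ^ 2 / Real.cosh x ^ 3 := by
  simp_rw [sinh_sq_div_cosh_cube]
  exact integrable_inv_cosh.sub integrable_inv_cosh_pow_three

lemma integral_sinh_sq_div_cosh_cube : ∫ x : ℝ, Real.sinh x ^ 2 / Real.cosh x ^ 3 = π / 2 := by
  simp_rw [sinh_sq_div_cosh_cube]
  rw [integral_sub integrable_inv_cosh integrable_inv_cosh_pow_three, integral_inv_cosh,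
    integral_inv_cosh_pow_three]
  ring

lemma integral_comp_mul_sub {E : Type*} [NormedAddCommGroup E] [NormedSpace ℝ E] (g : ℝ → E)
    (k c : ℝ) : ∫ x, g (k * (x - c)) = |k⁻¹| • ∫ u, g u := by
  rw [integral_sub_right_eq_self (fun x => g (k * x)) c, Measure.integral_comp_mul_left]

lemma norm_deriv_mul_ofReal_mul_exp_I_sq {c : ℂ} (hc : ‖c‖ = 1) {r θ : ℝ → ℝ} {r' θ' x : ℝ}
    (hr : HasDerivAt r r' x) (hθ : HasDerivAt θ θ' x) :
    ‖deriv (fun y => c * (r y : ℂ) * exp (I * (θ y : ℂ))) x‖ ^ 2 = r' ^ 2 + (r x * θ') ^ 2 := by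
  have h : HasDerivAt (fun y => c * (r y : ℂ) * exp (I * (θ y : ℂ)))
      (c * exp (I * θ x) * (r' + (r x * θ' : ℝ) * I)) x := by
    refine ((hr.ofReal_comp.const_mul c).mul (hθ.ofReal_comp.const_mul I).cexp).congr_deriv ?_
    push_cast
    ring
  rw [h.deriv, norm_mul, norm_mul, hc, norm_exp_I_mul_ofReal, one_mul, one_mul, Complex.sq_norm,
    normSq_add_mul_I]

lemma exists_hasDerivAt_sqrt_div_cosh {k : ℝ} (hk : 0 < k) (c x : ℝ) :
    ∃ r', HasDerivAt (fun y => √(k / Real.cosh (k * (y - c)))) r' x ∧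
      r' ^ 2 = k ^ 3 / 4 * (Real.sinh (k * (x - c)) ^ 2 / Real.cosh (k * (x - c)) ^ 3) := by
  set u := k * (x - c)
  have hc := Real.cosh_pos u
  have hρ : 0 < k / Real.cosh u := by positivity
  have hu : HasDerivAt (fun y => k * (y - c)) k x := by
    simpa using ((hasDerivAt_id x).sub_const c).const_mul k
  refine ⟨_, ((hasDerivAt_const x k).fun_div hu.cosh hc.ne').sqrt hρ.ne', ?_⟩
  rw [div_pow, mul_pow, Real.sq_sqrt hρ.le]
  field_simp
  ring

noncomputable def pulse (φ v k t x : ℝ) : ℂ :=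
  Complex.exp (Complex.I * (φ : ℂ)) *
    ((Real.sqrt (k / Real.cosh (k * (x - v * t))) : ℝ) : ℂ) *
    Complex.exp (Complex.I * ((v * x / 2 + (k ^ 2 - v ^ 2) * t / 4 : ℝ) : ℂ))

lemma norm_pulse (φ v k t x : ℝ) : ‖pulse φ v k t x‖ = √(k / Real.cosh (k * (x - v * t))) := by
  rw [pulse, norm_mul, norm_mul, norm_exp_I_mul_ofReal, norm_exp_I_mul_ofReal, one_mul, mul_one,
    Complex.norm_real, Real.norm_of_nonneg (Real.sqrt_nonneg _)]

lemma norm_pulse_pow_six {k : ℝ} (hk : 0 ≤ k) (φ v t x : ℝ) :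
    ‖pulse φ v k t x‖ ^ 6 = k ^ 3 * (Real.cosh (k * (x - v * t)))⁻¹ ^ 3 := by
  have hρ : 0 ≤ k / Real.cosh (k * (x - v * t)) := by positivity
  rw [norm_pulse, show 6 = 2 * 3 by rfl, pow_mul, Real.sq_sqrt hρ, div_pow, div_eq_mul_inv, inv_pow]

lemma norm_deriv_pulse_sq {k : ℝ} (hk : 0 < k) (φ v t x : ℝ) :
    ‖deriv (pulse φ v k t) x‖ ^ 2 =
      k ^ 3 / 4 * (Real.sinh (k * (x - v * t)) ^ 2 / Real.cosh (k * (x - v * t)) ^ 3) +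
        v ^ 2 * k / 4 * (Real.cosh (k * (x - v * t)))⁻¹ := by
  obtain ⟨r', hr, hr'⟩ := exists_hasDerivAt_sqrt_div_cosh hk (v * t) x
  have hθ : HasDerivAt (fun y => v * y / 2 + (k ^ 2 - v ^ 2) * t / 4) (v / 2) x := by
    simpa using (((hasDerivAt_id x).const_mul v).div_const 2).add_const ((k ^ 2 - v ^ 2) * t / 4)
  have hρ : 0 ≤ k / Real.cosh (k * (x - v * t)) := by positivity
  unfold pulse
  rw [norm_deriv_mul_ofReal_mul_exp_I_sq (norm_exp_I_mul_ofReal φ) hr hθ, hr', mul_pow,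
    Real.sq_sqrt hρ]
  ring

lemma integral_norm_deriv_pulse_sq {k : ℝ} (hk : 0 < k) (φ v t : ℝ) :
    ∫ x, ‖deriv (pulse φ v k t) x‖ ^ 2 = π * (v ^ 2 / 4 + k ^ 2 / 8) := by
  simp_rw [norm_deriv_pulse_sq hk]
  rw [integral_comp_mul_sub (fun u => k ^ 3 / 4 * (Real.sinh u ^ 2 / Real.cosh u ^ 3) +
    v ^ 2 * k / 4 * (Real.cosh u)⁻¹), integral_add, integral_const_mul, integral_const_mul,
    integral_sinh_sq_div_cosh_cube, integral_inv_cosh, abs_of_pos (inv_pos.mpr hk), smul_eq_mul]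
  · field_simp
    ring
  · exact integrable_sinh_sq_div_cosh_cube.const_mul _
  · exact integrable_inv_cosh.const_mul _

lemma integral_norm_pulse_pow_six {k : ℝ} (hk : 0 < k) (φ v t : ℝ) :
    ∫ x, ‖pulse φ v k t x‖ ^ 6 = π * k ^ 2 / 2 := by
  simp_rw [norm_pulse_pow_six hk.le]
  rw [integral_comp_mul_sub (fun u => k ^ 3 * (Real.cosh u)⁻¹ ^ 3), integral_const_mul,
    integral_inv_cosh_pow_three, abs_of_pos (inv_pos.mpr hk), smul_eq_mul]
  field_simp

theorem stmt_18 (φ v k t : ℝ) (hk : 0 < k) (A : ℝ → ℝ → ℂ)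
    (hA : ∀ x t, A x t =
      Complex.exp (Complex.I * (φ : ℂ)) *
        ((Real.sqrt (k / Real.cosh (k * (x - v * t))) : ℝ) : ℂ) *
        Complex.exp (Complex.I *
          ((v * x / 2 + (k ^ 2 - v ^ 2) * t / 4 : ℝ) : ℂ))) :
    (1 / Real.pi) * ∫ x : ℝ, ‖deriv (fun y => A y t) x‖ ^ 2 =
      v ^ 2 / 4 + k ^ 2 / 8 ∧
    (1 / (4 * Real.pi)) * ∫ x : ℝ, ‖A x t‖ ^ 6 = k ^ 2 / 8 ∧
    ((1 / Real.pi) * ∫ x : ℝ, ‖deriv (fun y => A y t) x‖ ^ 2) -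
      ((1 / (4 * Real.pi)) * ∫ x : ℝ, ‖A x t‖ ^ 6) = v ^ 2 / 4 := by
  have hpulse : ∀ x, A x t = pulse φ v k t x := fun x => hA x t
  have hkin : (1 / π) * ∫ x, ‖deriv (fun y => A y t) x‖ ^ 2 = v ^ 2 / 4 + k ^ 2 / 8 := by
    rw [show (fun y => A y t) = pulse φ v k t from funext hpulse,
      integral_norm_deriv_pulse_sq hk]
    field_simp
  have hpot : (1 / (4 * π)) * ∫ x, ‖A x t‖ ^ 6 = k ^ 2 / 8 := by
    simp_rw [hpulse]
    rw [integral_norm_pulse_pow_six hk]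
    field_simp
    ring
  exact ⟨hkin, hpot, by rw [hkin, hpot]; ring⟩
end
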